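/- The sum operation on finite sets of planar binary trees, defined by s + t := (s ⊣ t) ∪ (s ⊢ t), is associative. -/

import Mathlib

/-- Planar binary rooted trees: either the trivial tree `leaf` (drawn `|`)
or the grafting `node l r = l ∨ r` of two trees. -/
inductive PBT : Type
  | leaf : PBT
  | node : PBT → PBT → PBT
deriving DecidableEq

namespace PBT

/-- Number of internal vertices of a tree. -/
def size : PBT → ℕ
  | leaf => 0
  | node l r => l.size + r.size + 1

/-- The dendriform sum of two trees, a set of trees:
`s + t = (s ⊣ t) ∪ (s ⊢ t)` with `s ⊣ t = sˡ ∨ (sʳ + t)`, `s ⊢ t = (s + tˡ) ∨ tʳ`,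
and the trivial tree acting as neutral element. -/
def addT : PBT → PBT → Set PBT
  | leaf, t => {t}
  | node l r, leaf => {node l r}
  | node l r, node l' r' =>
      (fun x => node l x) '' addT r (node l' r') ∪
      (fun x => node x r') '' addT (node l r) l'
termination_by s t => s.size + t.size
decreasing_by all_goals (simp [size] <;> omega)

/-- The left operation `s ⊣ t := sˡ ∨ (sʳ + t)` on trees (with `s ⊣ | = s`),
valued in sets of trees. -/
def leftT : PBT → PBT → Set PBT
  | leaf, _ => ∅
  | node l r, leaf => {node l r}
  | node l r, node l' r' => (fun x => node l x) '' addT r (node l' r')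

/-- The right operation `s ⊢ t := (s + tˡ) ∨ tʳ` on trees (with `| ⊢ t = t`),
valued in sets of trees. -/
def rightT : PBT → PBT → Set PBT
  | _, leaf => ∅
  | leaf, t => {t}
  | node l r, node l' r' => (fun x => node x r') '' addT (node l r) l'

/-- Elementwise extension of `⊣` to sets of trees. -/
def leftS (S T : Set PBT) : Set PBT := ⋃ s ∈ S, ⋃ t ∈ T, leftT s t

/-- Elementwise extension of `⊢` to sets of trees. -/
def rightS (S T : Set PBT) : Set PBT := ⋃ s ∈ S, ⋃ t ∈ T, rightT s t

/-- Elementwise extension of the sum `+` to sets of trees: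
`S + T = (S ⊣ T) ∪ (S ⊢ T)`. -/
def addS (S T : Set PBT) : Set PBT := ⋃ s ∈ S, ⋃ t ∈ T, addT s t

/-- A nonempty finite set of nontrivial trees. -/
def Good (S : Set PBT) : Prop := S.Nonempty ∧ S.Finite ∧ ∀ t ∈ S, t ≠ leaf

end PBT

namespace PBT

theorem addT_leaf (t : PBT) : addT t leaf = {t} := by
  cases t <;> simp [addT]

theorem leaf_addT (t : PBT) : addT leaf t = {t} := by
  simp [addT]

theorem addT_assoc_mem (a b c x : PBT) :
    (∃ y ∈ addT a b, x ∈ addT y c) ↔ (∃ z ∈ addT b c, x ∈ addT a z) := by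
  cases a with
  | leaf => simp [leaf_addT]
  | node a1 a2 =>
    cases b with
    | leaf => simp [addT_leaf, leaf_addT]
    | node b1 b2 =>
      cases c with
      | leaf => simp [addT_leaf]
      | node c1 c2 =>
        have IH1 : ∀ x, (∃ y ∈ addT a2 (node b1 b2), x ∈ addT y (node c1 c2)) ↔
            (∃ z ∈ addT (node b1 b2) (node c1 c2), x ∈ addT a2 z) :=
          fun x => addT_assoc_mem a2 (node b1 b2) (node c1 c2) x
        have IH2 : ∀ x, (∃ y ∈ addT (node a1 a2) (node b1 b2), x ∈ addT y c1) ↔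
            (∃ z ∈ addT (node b1 b2) c1, x ∈ addT (node a1 a2) z) :=
          fun x => addT_assoc_mem (node a1 a2) (node b1 b2) c1 x
        constructor
        · rintro ⟨y, hy, hx⟩
          rw [show addT (node a1 a2) (node b1 b2) =
              (fun x => node a1 x) '' addT a2 (node b1 b2) ∪
              (fun x => node x b2) '' addT (node a1 a2) b1 from by rw [addT]] at hy
          rcases hy with ⟨u, hu, rfl⟩ | ⟨v, hv, rfl⟩
          · -- y = node a1 u, u ∈ addT a2 b
            rw [show addT (node a1 u) (node c1 c2) =
                (fun x => node a1 x) '' addT u (node c1 c2) ∪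
                (fun x => node x c2) '' addT (node a1 u) c1 from by rw [addT]] at hx
            rcases hx with ⟨w, hw, rfl⟩ | ⟨w, hw, rfl⟩
            · -- x = node a1 w, w ∈ addT u c
              obtain ⟨z, hz, hw'⟩ := (IH1 w).1 ⟨u, hu, hw⟩
              refine ⟨z, hz, ?_⟩
              rcases z with _ | ⟨z1, z2⟩
              · exact absurd hz (by
                  rw [show addT (node b1 b2) (node c1 c2) =
                      (fun x => node b1 x) '' addT b2 (node c1 c2) ∪
                      (fun x => node x c2) '' addT (node b1 b2) c1 from by rw [addT]]
                  rintro (⟨_, _, h⟩ | ⟨_, _, h⟩) <;> exact PBT.noConfusion h)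
              · rw [show addT (node a1 a2) (node z1 z2) =
                    (fun x => node a1 x) '' addT a2 (node z1 z2) ∪
                    (fun x => node x z2) '' addT (node a1 a2) z1 from by rw [addT]]
                exact Or.inl ⟨w, hw', rfl⟩
            · -- x = node w c2, w ∈ addT (node a1 u) c1
              obtain ⟨z, hz, hw'⟩ := (IH2 w).1
                ⟨node a1 u, by
                  rw [show addT (node a1 a2) (node b1 b2) =
                      (fun x => node a1 x) '' addT a2 (node b1 b2) ∪
                      (fun x => node x b2) '' addT (node a1 a2) b1 from by rw [addT]]
                  exact Or.inl ⟨u, hu, rfl⟩, hw⟩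
              refine ⟨node z c2, ?_, ?_⟩
              · rw [show addT (node b1 b2) (node c1 c2) =
                    (fun x => node b1 x) '' addT b2 (node c1 c2) ∪
                    (fun x => node x c2) '' addT (node b1 b2) c1 from by rw [addT]]
                exact Or.inr ⟨z, hz, rfl⟩
              · rw [show addT (node a1 a2) (node z c2) =
                    (fun x => node a1 x) '' addT a2 (node z c2) ∪
                    (fun x => node x c2) '' addT (node a1 a2) z from by rw [addT]]
                exact Or.inr ⟨w, hw', rfl⟩
          · -- y = node v b2, v ∈ addT a b1
            rw [show addT (node v b2) (node c1 c2) =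
                (fun x => node v x) '' addT b2 (node c1 c2) ∪
                (fun x => node x c2) '' addT (node v b2) c1 from by rw [addT]] at hx
            rcases hx with ⟨w, hw, rfl⟩ | ⟨w, hw, rfl⟩
            · -- x = node v w, w ∈ addT b2 c
              refine ⟨node b1 w, ?_, ?_⟩
              · rw [show addT (node b1 b2) (node c1 c2) =
                    (fun x => node b1 x) '' addT b2 (node c1 c2) ∪
                    (fun x => node x c2) '' addT (node b1 b2) c1 from by rw [addT]]
                exact Or.inl ⟨w, hw, rfl⟩
              · rw [show addT (node a1 a2) (node b1 w) =
                    (fun x => node a1 x) '' addT a2 (node b1 w) ∪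
                    (fun x => node x w) '' addT (node a1 a2) b1 from by rw [addT]]
                exact Or.inr ⟨v, hv, rfl⟩
            · -- x = node w c2, w ∈ addT (node v b2) c1
              obtain ⟨z, hz, hw'⟩ := (IH2 w).1
                ⟨node v b2, by
                  rw [show addT (node a1 a2) (node b1 b2) =
                      (fun x => node a1 x) '' addT a2 (node b1 b2) ∪
                      (fun x => node x b2) '' addT (node a1 a2) b1 from by rw [addT]]
                  exact Or.inr ⟨v, hv, rfl⟩, hw⟩
              refine ⟨node z c2, ?_, ?_⟩
              · rw [show addT (node b1 b2) (node c1 c2) =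
                    (fun x => node b1 x) '' addT b2 (node c1 c2) ∪
                    (fun x => node x c2) '' addT (node b1 b2) c1 from by rw [addT]]
                exact Or.inr ⟨z, hz, rfl⟩
              · rw [show addT (node a1 a2) (node z c2) =
                    (fun x => node a1 x) '' addT a2 (node z c2) ∪
                    (fun x => node x c2) '' addT (node a1 a2) z from by rw [addT]]
                exact Or.inr ⟨w, hw', rfl⟩
        · rintro ⟨z, hz, hx⟩
          rw [show addT (node b1 b2) (node c1 c2) =
              (fun x => node b1 x) '' addT b2 (node c1 c2) ∪
              (fun x => node x c2) '' addT (node b1 b2) c1 from by rw [addT]] at hz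
          rcases hz with ⟨w, hw, rfl⟩ | ⟨w, hw, rfl⟩
          · -- z = node b1 w, w ∈ addT b2 c
            rw [show addT (node a1 a2) (node b1 w) =
                (fun x => node a1 x) '' addT a2 (node b1 w) ∪
                (fun x => node x w) '' addT (node a1 a2) b1 from by rw [addT]] at hx
            rcases hx with ⟨u, hu, rfl⟩ | ⟨v, hv, rfl⟩
            · -- x = node a1 u, u ∈ addT a2 (node b1 w)
              obtain ⟨y, hy, hu'⟩ := (IH1 u).2
                ⟨node b1 w, by
                  rw [show addT (node b1 b2) (node c1 c2) =
                      (fun x => node b1 x) '' addT b2 (node c1 c2) ∪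
                      (fun x => node x c2) '' addT (node b1 b2) c1 from by rw [addT]]
                  exact Or.inl ⟨w, hw, rfl⟩, hu⟩
              refine ⟨node a1 y, ?_, ?_⟩
              · rw [show addT (node a1 a2) (node b1 b2) =
                    (fun x => node a1 x) '' addT a2 (node b1 b2) ∪
                    (fun x => node x b2) '' addT (node a1 a2) b1 from by rw [addT]]
                exact Or.inl ⟨y, hy, rfl⟩
              · rw [show addT (node a1 y) (node c1 c2) =
                    (fun x => node a1 x) '' addT y (node c1 c2) ∪
                    (fun x => node x c2) '' addT (node a1 y) c1 from by rw [addT]]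
                exact Or.inl ⟨u, hu', rfl⟩
            · -- x = node v w, v ∈ addT (node a1 a2) b1
              refine ⟨node v b2, ?_, ?_⟩
              · rw [show addT (node a1 a2) (node b1 b2) =
                    (fun x => node a1 x) '' addT a2 (node b1 b2) ∪
                    (fun x => node x b2) '' addT (node a1 a2) b1 from by rw [addT]]
                exact Or.inr ⟨v, hv, rfl⟩
              · rw [show addT (node v b2) (node c1 c2) =
                    (fun x => node v x) '' addT b2 (node c1 c2) ∪
                    (fun x => node x c2) '' addT (node v b2) c1 from by rw [addT]]
                exact Or.inl ⟨w, hw, rfl⟩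
          · -- z = node w c2, w ∈ addT (node b1 b2) c1
            rw [show addT (node a1 a2) (node w c2) =
                (fun x => node a1 x) '' addT a2 (node w c2) ∪
                (fun x => node x c2) '' addT (node a1 a2) w from by rw [addT]] at hx
            rcases hx with ⟨u, hu, rfl⟩ | ⟨v, hv, rfl⟩
            · -- x = node a1 u, u ∈ addT a2 (node w c2)
              obtain ⟨y, hy, hu'⟩ := (IH1 u).2
                ⟨node w c2, by
                  rw [show addT (node b1 b2) (node c1 c2) =
                      (fun x => node b1 x) '' addT b2 (node c1 c2) ∪
                      (fun x => node x c2) '' addT (node b1 b2) c1 from by rw [addT]]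
                  exact Or.inr ⟨w, hw, rfl⟩, hu⟩
              refine ⟨node a1 y, ?_, ?_⟩
              · rw [show addT (node a1 a2) (node b1 b2) =
                    (fun x => node a1 x) '' addT a2 (node b1 b2) ∪
                    (fun x => node x b2) '' addT (node a1 a2) b1 from by rw [addT]]
                exact Or.inl ⟨y, hy, rfl⟩
              · rw [show addT (node a1 y) (node c1 c2) =
                    (fun x => node a1 x) '' addT y (node c1 c2) ∪
                    (fun x => node x c2) '' addT (node a1 y) c1 from by rw [addT]]
                exact Or.inl ⟨u, hu', rfl⟩
            · -- x = node v c2, v ∈ addT (node a1 a2) w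
              obtain ⟨y, hy, hv'⟩ := (IH2 v).2 ⟨w, hw, hv⟩
              refine ⟨y, hy, ?_⟩
              rcases y with _ | ⟨y1, y2⟩
              · exact absurd hy (by
                  rw [show addT (node a1 a2) (node b1 b2) =
                      (fun x => node a1 x) '' addT a2 (node b1 b2) ∪
                      (fun x => node x b2) '' addT (node a1 a2) b1 from by rw [addT]]
                  rintro (⟨_, _, h⟩ | ⟨_, _, h⟩) <;> exact PBT.noConfusion h)
              · rw [show addT (node y1 y2) (node c1 c2) =
                    (fun x => node y1 x) '' addT y2 (node c1 c2) ∪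
                    (fun x => node x c2) '' addT (node y1 y2) c1 from by rw [addT]]
                exact Or.inr ⟨v, hv', rfl⟩
termination_by a.size + b.size + c.size
decreasing_by all_goals (simp [size] <;> omega)

end PBT

open PBT in
/-- The sum `S + T := (S ⊣ T) ∪ (S ⊢ T)` on finite sets of planar binary trees
is associative. -/
theorem addS_assoc (r s t : Set PBT)
    (hr : r.Finite) (hs : s.Finite) (ht : t.Finite) :
    addS (addS r s) t = addS r (addS s t) := by
  ext x
  simp only [addS, Set.mem_iUnion, exists_prop]
  constructor
  · rintro ⟨y, ⟨a, ha, b, hb, hy⟩, c, hc, hx⟩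
    obtain ⟨z, hz, hx'⟩ := (addT_assoc_mem a b c x).1 ⟨y, hy, hx⟩
    exact ⟨a, ha, z, ⟨b, hb, c, hc, hz⟩, hx'⟩
  · rintro ⟨a, ha, z, ⟨b, hb, c, hc, hz⟩, hx⟩
    obtain ⟨y, hy, hx'⟩ := (addT_assoc_mem a b c x).2 ⟨z, hz, hx⟩
    exact ⟨y, ⟨a, ha, b, hb, hy⟩, c, hc, hx'⟩
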